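/- arXiv:2204.12450 — 6 statements merged into one kernel-verified Lean document; each statement's English description precedes it below -/
import Mathlib

section
/- Suppose p(t,h) is continuous in h near 0 with p(t,0) = t, and for all sufficiently small ε > 0 the equations p(t,h) = t + ε and p(t,h) = t - ε have solutions h(t,ε) tending to 0 as ε → 0. If the p-derivative of f exists at a point a, then f is continuous at a. -/
open Filter Set Topology

lemma pDeriv_aux (f : ℝ → ℝ) (p : ℝ → ℝ → ℝ) (a : ℝ) (L : ℝ)
    (hD : Tendsto (fun h : ℝ => (f (p a h) - f a) / h) (𝓝[≠] (0:ℝ)) (𝓝 L))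
    (g c : ℝ → ℝ)
    (hge : ∀ᶠ ε in 𝓝[>] (0:ℝ), p a (g ε) = c ε)
    (hca : ∀ᶠ ε in 𝓝[>] (0:ℝ), p a 0 ≠ c ε)
    (hg : Tendsto g (𝓝[>] (0:ℝ)) (𝓝 0)) :
    Tendsto (fun ε => f (c ε)) (𝓝[>] (0:ℝ)) (𝓝 (f a)) := by
  have hne : ∀ᶠ ε in 𝓝[>] (0:ℝ), g ε ≠ 0 := by
    filter_upwards [hge, hca] with ε h1 h2 h0
    exact h2 (by rw [← h0, h1])
  have hg' : Tendsto g (𝓝[>] (0:ℝ)) (𝓝[≠] (0:ℝ)) :=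
    tendsto_nhdsWithin_iff.2 ⟨hg, hne⟩
  have hq : Tendsto (fun ε => (f (p a (g ε)) - f a) / g ε) (𝓝[>] (0:ℝ)) (𝓝 L) :=
    hD.comp hg'
  have hmul : Tendsto (fun ε => (f (p a (g ε)) - f a) / g ε * g ε)
      (𝓝[>] (0:ℝ)) (𝓝 (L * 0)) := hq.mul hg
  rw [mul_zero] at hmul
  have heq : ∀ᶠ ε in 𝓝[>] (0:ℝ),
      (f (p a (g ε)) - f a) / g ε * g ε = f (c ε) - f a := by
    filter_upwards [hne, hge] with ε h1 h2
    rw [div_mul_cancel₀ _ h1, h2]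
  have : Tendsto (fun ε => f (c ε) - f a) (𝓝[>] (0:ℝ)) (𝓝 0) :=
    hmul.congr' heq
  have := this.add_const (f a)
  simpa using this

/-- Hypothesis (H): `p(a,·)` continuous near 0 with `p(a,0) = a`, and for all
small `ε > 0` the equations `p(a,h) = a ± ε` have solutions tending to `0` as
`ε → 0⁺`. Then p-differentiability of `f` at `a` implies continuity at `a`. -/
theorem continuousAt_of_pDeriv (f : ℝ → ℝ) (p : ℝ → ℝ → ℝ) (a : ℝ)
    (hpc : ∀ᶠ h in 𝓝 (0:ℝ), ContinuousAt (fun h => p a h) h)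
    (hp0 : p a 0 = a)
    (hplus hminus : ℝ → ℝ)
    (hpe : ∀ᶠ ε in 𝓝[>] (0:ℝ), p a (hplus ε) = a + ε)
    (hme : ∀ᶠ ε in 𝓝[>] (0:ℝ), p a (hminus ε) = a - ε)
    (hp_to : Tendsto hplus (𝓝[>] (0:ℝ)) (𝓝 0))
    (hm_to : Tendsto hminus (𝓝[>] (0:ℝ)) (𝓝 0))
    (L : ℝ)
    (hD : Tendsto (fun h : ℝ => (f (p a h) - f a) / h) (𝓝[≠] (0:ℝ)) (𝓝 L)) :
    ContinuousAt f a := by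
  have hpos : ∀ᶠ ε in 𝓝[>] (0:ℝ), (0:ℝ) < ε := self_mem_nhdsWithin
  have hplus_lim : Tendsto (fun ε => f (a + ε)) (𝓝[>] (0:ℝ)) (𝓝 (f a)) :=
    pDeriv_aux f p a L hD hplus (fun ε => a + ε) hpe
      (by filter_upwards [hpos] with ε hε; rw [hp0]; intro h; linarith) hp_to
  have hminus_lim : Tendsto (fun ε => f (a - ε)) (𝓝[>] (0:ℝ)) (𝓝 (f a)) :=
    pDeriv_aux f p a L hD hminus (fun ε => a - ε) hme
      (by filter_upwards [hpos] with ε hε; rw [hp0]; intro h; linarith) hm_to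
  rw [continuousAt_iff_continuous_left_right]
  constructor
  · rw [← continuousWithinAt_Iio_iff_Iic]
    have hmap : Tendsto (fun x : ℝ => a - x) (𝓝[<] a) (𝓝[>] (0:ℝ)) := by
      apply tendsto_nhdsWithin_of_tendsto_nhds_of_eventually_within
      · have : Tendsto (fun x : ℝ => a - x) (𝓝 a) (𝓝 (a - a)) :=
          (continuous_const.sub continuous_id).tendsto a
        exact (by simpa using this : Tendsto _ (𝓝 a) (𝓝 (0:ℝ))).mono_left nhdsWithin_le_nhds
      · filter_upwards [self_mem_nhdsWithin] with x (hx : x < a)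
        simpa using hx
    have := hminus_lim.comp hmap
    refine this.congr fun x => by simp
  · rw [← continuousWithinAt_Ioi_iff_Ici]
    have hmap : Tendsto (fun x : ℝ => x - a) (𝓝[>] a) (𝓝[>] (0:ℝ)) := by
      apply tendsto_nhdsWithin_of_tendsto_nhds_of_eventually_within
      · have : Tendsto (fun x : ℝ => x - a) (𝓝 a) (𝓝 (a - a)) :=
          (continuous_id.sub continuous_const).tendsto a
        exact (by simpa using this : Tendsto _ (𝓝 a) (𝓝 (0:ℝ))).mono_left nhdsWithin_le_nhds
      · filter_upwards [self_mem_nhdsWithin] with x (hx : a < x)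
        simpa using hx
    have := hplus_lim.comp hmap
    refine this.congr fun x => by simp
end

section
/- Assume p(t,·) is continuous at h = 0 with p(t,0) = t and p satisfies hypothesis (H) at t. If f and g are both p-differentiable at t, then the product f·g is p-differentiable at t and D_p(f·g)(t) = f(t)·D_p g(t) + g(t)·D_p f(t). -/
open Filter Set Topology

/-- Product rule for p-derivatives, under hypothesis (H). -/
theorem pDeriv_mul (f g : ℝ → ℝ) (p : ℝ → ℝ → ℝ) (t Lf Lg : ℝ)
    (hp0 : p t 0 = t)
    (hpc : ContinuousAt (fun h => p t h) 0)
    (hplus hminus : ℝ → ℝ)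
    (hpe : ∀ᶠ ε in 𝓝[>] (0:ℝ), p t (hplus ε) = t + ε)
    (hme : ∀ᶠ ε in 𝓝[>] (0:ℝ), p t (hminus ε) = t - ε)
    (hp_to : Tendsto hplus (𝓝[>] (0:ℝ)) (𝓝 0))
    (hm_to : Tendsto hminus (𝓝[>] (0:ℝ)) (𝓝 0))
    (hf : Tendsto (fun h : ℝ => (f (p t h) - f t) / h) (𝓝[≠] (0:ℝ)) (𝓝 Lf))
    (hg : Tendsto (fun h : ℝ => (g (p t h) - g t) / h) (𝓝[≠] (0:ℝ)) (𝓝 Lg)) :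
    Tendsto (fun h : ℝ => (f (p t h) * g (p t h) - f t * g t) / h)
      (𝓝[≠] (0:ℝ)) (𝓝 (f t * Lg + g t * Lf)) := by
  have hh : Tendsto (fun h : ℝ => h) (𝓝[≠] (0:ℝ)) (𝓝 0) :=
    tendsto_id.mono_left nhdsWithin_le_nhds
  -- f ∘ p tends to f t
  have hfc : Tendsto (fun h : ℝ => f (p t h)) (𝓝[≠] (0:ℝ)) (𝓝 (f t)) := by
    have h1 := (hf.mul hh).add (tendsto_const_nhds (x := f t) (f := 𝓝[≠] (0:ℝ)))
    rw [mul_zero, zero_add] at h1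
    refine h1.congr' ?_
    filter_upwards [self_mem_nhdsWithin] with h h0
    rw [div_mul_cancel₀ _ h0, sub_add_cancel]
  have key := (hfc.mul hg).add (hf.mul (tendsto_const_nhds (x := g t)))
  have heq : ∀ h : ℝ,
      f (p t h) * ((g (p t h) - g t) / h) + ((f (p t h) - f t) / h) * g t
        = (f (p t h) * g (p t h) - f t * g t) / h := by
    intro h
    ring
  have : f t * Lg + Lf * g t = f t * Lg + g t * Lf := by ring
  rw [this] at key
  exact key.congr heq
end

section
/- Assume p satisfies hypothesis (H) at t with p(t,0) = t. If f and g are both p-differentiable at t and g(t) ≠ 0, then f/g is p-differentiable at t and D_p(f/g)(t) = (g(t)·D_p f(t) − f(t)·D_p g(t)) / g(t)². -/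
open Filter Set Topology

/-!
A `p`-derivative of `u` at `t` is an ordinary derivative at `0` of `h ↦ u (p t h)`, once
this function is redefined at `0` to take the value `u t`. The quotient rule for
`p`-derivatives is therefore the usual quotient rule `HasDerivAt.div`.
-/

section SlopeAtZero

variable {𝕜 : Type*} [NontriviallyNormedField 𝕜]

theorem hasDerivAt_update_zero_iff [DecidableEq 𝕜] {u : 𝕜 → 𝕜} {a L : 𝕜} :
    HasDerivAt (Function.update u 0 a) L 0 ↔
      Tendsto (fun h => (u h - a) / h) (𝓝[≠] 0) (𝓝 L) := by
  rw [hasDerivAt_iff_tendsto_slope]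
  refine tendsto_congr' ?_
  filter_upwards [self_mem_nhdsWithin] with h (hh : h ≠ 0)
  simp [slope_def_field, hh]

theorem tendsto_div_sub_div_div_of_tendsto {u v : 𝕜 → 𝕜} {a b L M : 𝕜}
    (hu : Tendsto (fun h => (u h - a) / h) (𝓝[≠] 0) (𝓝 L))
    (hv : Tendsto (fun h => (v h - b) / h) (𝓝[≠] 0) (𝓝 M)) (hb : b ≠ 0) :
    Tendsto (fun h => (u h / v h - a / b) / h) (𝓝[≠] 0) (𝓝 ((L * b - a * M) / b ^ 2)) := by
  classical
  have hdiv := (hasDerivAt_update_zero_iff.mpr hu).div (hasDerivAt_update_zero_iff.mpr hv)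
    (by simpa using hb)
  have hupdate : Function.update u 0 a / Function.update v 0 b =
      Function.update (u / v) 0 (a / b) := by
    ext h
    by_cases hh : h = 0 <;> simp [hh]
  rw [hupdate, hasDerivAt_update_zero_iff] at hdiv
  simpa using hdiv

end SlopeAtZero

theorem pDeriv_div_general (f g : ℝ → ℝ) (p : ℝ → ℝ → ℝ) (t Lf Lg : ℝ)
    (hf : Tendsto (fun h : ℝ => (f (p t h) - f t) / h) (𝓝[≠] (0:ℝ)) (𝓝 Lf))
    (hg : Tendsto (fun h : ℝ => (g (p t h) - g t) / h) (𝓝[≠] (0:ℝ)) (𝓝 Lg))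
    (hgt : g t ≠ 0) :
    Tendsto (fun h : ℝ => (f (p t h) / g (p t h) - f t / g t) / h)
      (𝓝[≠] (0:ℝ)) (𝓝 ((g t * Lf - f t * Lg) / (g t) ^ 2)) := by
  convert tendsto_div_sub_div_div_of_tendsto hf hg hgt using 3
  ring

/-- Quotient rule for p-derivatives, under hypothesis (H). -/
theorem pDeriv_div (f g : ℝ → ℝ) (p : ℝ → ℝ → ℝ) (t Lf Lg : ℝ)
    (hp0 : p t 0 = t)
    (hpc : ContinuousAt (fun h => p t h) 0)
    (hplus hminus : ℝ → ℝ)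
    (hpe : ∀ᶠ ε in 𝓝[>] (0:ℝ), p t (hplus ε) = t + ε)
    (hme : ∀ᶠ ε in 𝓝[>] (0:ℝ), p t (hminus ε) = t - ε)
    (hp_to : Tendsto hplus (𝓝[>] (0:ℝ)) (𝓝 0))
    (hm_to : Tendsto hminus (𝓝[>] (0:ℝ)) (𝓝 0))
    (hf : Tendsto (fun h : ℝ => (f (p t h) - f t) / h) (𝓝[≠] (0:ℝ)) (𝓝 Lf))
    (hg : Tendsto (fun h : ℝ => (g (p t h) - g t) / h) (𝓝[≠] (0:ℝ)) (𝓝 Lg))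
    (hgt : g t ≠ 0) :
    Tendsto (fun h : ℝ => (f (p t h) / g (p t h) - f t / g t) / h)
      (𝓝[≠] (0:ℝ)) (𝓝 ((g t * Lf - f t * Lg) / (g t) ^ 2)) :=
  pDeriv_div_general f g p t Lf Lg hf hg hgt
end

section
/- Let f be continuous, p-differentiable at t with p satisfying (H) and p(t,0) = t, and let g be differentiable (in the ordinary sense) at f(t). Then g ∘ f is p-differentiable at t and D_p(g∘f)(t) = g'(f(t))·D_p f(t). -/
open Filter Set Topology

/-- Chain rule: if `f` is continuous and p-differentiable at `t` (with `p`
satisfying (H) and `p(t,0) = t`) and `g` is differentiable at `f t`, then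
`g ∘ f` is p-differentiable at `t` with derivative `g'(f t) · D_p f(t)`. -/
theorem pDeriv_comp (f g : ℝ → ℝ) (p : ℝ → ℝ → ℝ) (t Lf g' : ℝ)
    (hfc : ContinuousAt f t)
    (hp0 : p t 0 = t)
    (hpc : ContinuousAt (fun h => p t h) 0)
    (hplus hminus : ℝ → ℝ)
    (hpe : ∀ᶠ ε in 𝓝[>] (0:ℝ), p t (hplus ε) = t + ε)
    (hme : ∀ᶠ ε in 𝓝[>] (0:ℝ), p t (hminus ε) = t - ε)
    (hp_to : Tendsto hplus (𝓝[>] (0:ℝ)) (𝓝 0))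
    (hm_to : Tendsto hminus (𝓝[>] (0:ℝ)) (𝓝 0))
    (hf : Tendsto (fun h : ℝ => (f (p t h) - f t) / h) (𝓝[≠] (0:ℝ)) (𝓝 Lf))
    (hg : HasDerivAt g g' (f t)) :
    Tendsto (fun h : ℝ => (g (f (p t h)) - g (f t)) / h)
      (𝓝[≠] (0:ℝ)) (𝓝 (g' * Lf)) := by
  -- auxiliary "difference quotient" function for g at f t
  set φ : ℝ → ℝ := fun y => if y = f t then g' else (g y - g (f t)) / (y - f t) with hφ
  have hφt : Tendsto φ (𝓝 (f t)) (𝓝 g') := by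
    rw [← nhdsNE_sup_pure (f t)]
    refine Tendsto.sup ?_ ?_
    · have := hasDerivAt_iff_tendsto_slope.mp hg
      refine this.congr' ?_
      filter_upwards [self_mem_nhdsWithin] with y hy
      have hy' : y ≠ f t := hy
      simp only [hφ, if_neg hy', slope_def_field, div_eq_inv_mul]
    · have hv : φ (f t) = g' := if_pos rfl
      rw [← hv]
      exact tendsto_pure_nhds φ (f t)
  have hcomp : Tendsto (fun h : ℝ => f (p t h)) (𝓝[≠] (0:ℝ)) (𝓝 (f t)) := by
    have h1 : Tendsto (fun h => p t h) (𝓝[≠] (0:ℝ)) (𝓝 t) := by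
      have := hpc.tendsto
      rw [hp0] at this
      exact this.mono_left nhdsWithin_le_nhds
    exact (hfc.tendsto.comp h1)
  have hφcomp : Tendsto (fun h : ℝ => φ (f (p t h))) (𝓝[≠] (0:ℝ)) (𝓝 g') :=
    hφt.comp hcomp
  have key : ∀ h : ℝ, (g (f (p t h)) - g (f t)) / h
      = φ (f (p t h)) * ((f (p t h) - f t) / h) := by
    intro h
    by_cases hy : f (p t h) = f t
    · simp [hφ, hy]
    · rcases eq_or_ne h 0 with rfl | hh
      · simp [hφ, if_neg hy]
      · have hb : f (p t h) - f t ≠ 0 := sub_ne_zero.mpr hy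
        simp only [hφ, if_neg hy]
        field_simp
  simpa only [key] using hφcomp.mul hf
end

section
/- (Generalized Mean Value Theorem) Let f be continuous on [a,b], and suppose f and the function t ↦ t − a are p-differentiable on (a,b), where p satisfies the monotonicity condition: for small |h|, p(t,h) > t when h > 0 and p(t,h) < t when h < 0. Then there is c ∈ (a,b) with D_p f(c) = ((f(b) − f(a))/(b − a)) · k, where k = D_p(t ↦ t − a)(c). -/
/-!
Subtract the chord: `φ t = f t - m (t - a)` with `m = (f b - f a) / (b - a)` satisfies
`φ a = φ b`, so by Rolle it has an extremum at some `c ∈ (a, b)`. Its p-difference quotients at `c`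
tend to `D_p f(c) - m k`. Since `p c h → c` (the p-difference quotient of `t ↦ t - a` converges),
`φ (p c h) - φ c` has a fixed sign for small `h`, so the quotient's one-sided limits at `0⁺` and
`0⁻` have opposite signs, and the limit is `0` as in Fermat's theorem.
-/

open Filter Set Topology

theorem tendsto_nhdsNE_of_tendsto_slope {q : ℝ → ℝ} {c L : ℝ}
    (hq : Tendsto (fun h => (q h - c) / h) (𝓝[≠] 0) (𝓝 L)) :
    Tendsto q (𝓝[≠] 0) (𝓝 c) := by
  have hlim : Tendsto (fun h => (q h - c) / h * h + c) (𝓝[≠] 0) (𝓝 (L * 0 + c)) :=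
    (hq.mul (tendsto_id.mono_left nhdsWithin_le_nhds)).add_const c
  rw [mul_zero, zero_add] at hlim
  refine hlim.congr' ?_
  filter_upwards [self_mem_nhdsWithin] with h (hh : h ≠ 0)
  rw [div_mul_cancel₀ _ hh, sub_add_cancel]

theorem IsLocalMax.eq_zero_of_tendsto_slope {φ q : ℝ → ℝ} {c L : ℝ} (hmax : IsLocalMax φ c)
    (hq : Tendsto q (𝓝[≠] 0) (𝓝 c))
    (hL : Tendsto (fun h => (φ (q h) - φ c) / h) (𝓝[≠] 0) (𝓝 L)) : L = 0 := by
  have hle : ∀ᶠ h in 𝓝[≠] 0, φ (q h) ≤ φ c := hq.eventually hmax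
  have hpos : 𝓝[>] (0 : ℝ) ≤ 𝓝[≠] 0 := nhdsWithin_mono _ fun _ hx => ne_of_gt hx
  have hneg : 𝓝[<] (0 : ℝ) ≤ 𝓝[≠] 0 := nhdsWithin_mono _ fun _ hx => ne_of_lt hx
  apply le_antisymm
  · refine le_of_tendsto (hL.mono_left hpos) ?_
    filter_upwards [hpos hle, self_mem_nhdsWithin] with h hh (h0 : 0 < h)
    exact div_nonpos_of_nonpos_of_nonneg (sub_nonpos.mpr hh) h0.le
  · refine ge_of_tendsto (hL.mono_left hneg) ?_
    filter_upwards [hneg hle, self_mem_nhdsWithin] with h hh (h0 : h < 0)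
    exact div_nonneg_of_nonpos (sub_nonpos.mpr hh) h0.le

theorem IsLocalExtr.eq_zero_of_tendsto_slope {φ q : ℝ → ℝ} {c L : ℝ} (hextr : IsLocalExtr φ c)
    (hq : Tendsto q (𝓝[≠] 0) (𝓝 c))
    (hL : Tendsto (fun h => (φ (q h) - φ c) / h) (𝓝[≠] 0) (𝓝 L)) : L = 0 := by
  rcases hextr with hmin | hmax
  · have hL' : Tendsto (fun h => (-φ (q h) - -φ c) / h) (𝓝[≠] 0) (𝓝 (-L)) :=
      hL.neg.congr fun h => by ring
    exact neg_eq_zero.mp (IsLocalMin.neg hmin |>.eq_zero_of_tendsto_slope hq hL')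
  · exact IsLocalMax.eq_zero_of_tendsto_slope hmax hq hL

theorem pDeriv_mvt_general (a b : ℝ) (hab : a < b) (f : ℝ → ℝ) (p : ℝ → ℝ → ℝ)
    (Df Dg : ℝ → ℝ)
    (hfc : ContinuousOn f (Set.Icc a b))
    (hDf : ∀ t ∈ Set.Ioo a b,
      Tendsto (fun h : ℝ => (f (p t h) - f t) / h) (𝓝[≠] (0:ℝ)) (𝓝 (Df t)))
    (hDg : ∀ t ∈ Set.Ioo a b,
      Tendsto (fun h : ℝ => ((p t h - a) - (t - a)) / h) (𝓝[≠] (0:ℝ)) (𝓝 (Dg t))) :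
    ∃ c ∈ Set.Ioo a b, Df c = ((f b - f a) / (b - a)) * Dg c := by
  set m := (f b - f a) / (b - a)
  have hφ_eq : f a - m * (a - a) = f b - m * (b - a) := by
    simp only [m]
    field_simp [sub_ne_zero.mpr hab.ne']
    ring
  obtain ⟨c, hc, hextr⟩ := exists_Ioo_extr_on_Icc (f := fun t => f t - m * (t - a)) hab
    (hfc.sub (by fun_prop)) hφ_eq
  refine ⟨c, hc, ?_⟩
  have hpc : Tendsto (p c) (𝓝[≠] 0) (𝓝 c) :=
    tendsto_nhdsNE_of_tendsto_slope ((hDg c hc).congr fun h => by ring)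
  have hslope := ((hDf c hc).sub ((hDg c hc).const_mul m)).congr fun h => by
    show _ = ((f (p c h) - m * (p c h - a)) - (f c - m * (c - a))) / h
    ring
  have hzero := (hextr.isLocalExtr (Icc_mem_nhds hc.1 hc.2)).eq_zero_of_tendsto_slope hpc hslope
  linarith

/-- Generalized Mean Value Theorem: if `f` is continuous on `[a,b]` and both
`f` and `t ↦ t - a` are p-differentiable on `(a,b)` (with p-derivatives `Df`
and `Dg` resp.), and `p` satisfies the monotonicity condition, then there is
`c ∈ (a,b)` with `D_p f(c) = ((f b - f a)/(b - a)) · k`, `k = D_p(· - a)(c)`. -/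
theorem pDeriv_mvt (a b : ℝ) (hab : a < b) (f : ℝ → ℝ) (p : ℝ → ℝ → ℝ)
    (Df Dg : ℝ → ℝ)
    (hfc : ContinuousOn f (Set.Icc a b))
    (hDf : ∀ t ∈ Set.Ioo a b,
      Tendsto (fun h : ℝ => (f (p t h) - f t) / h) (𝓝[≠] (0:ℝ)) (𝓝 (Df t)))
    (hDg : ∀ t ∈ Set.Ioo a b,
      Tendsto (fun h : ℝ => ((p t h - a) - (t - a)) / h) (𝓝[≠] (0:ℝ)) (𝓝 (Dg t)))
    (hp : ∀ t ∈ Set.Ioo a b, ∀ᶠ h in 𝓝 (0:ℝ),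
      (0 < h → t < p t h) ∧ (h < 0 → p t h < t)) :
    ∃ c ∈ Set.Ioo a b, Df c = ((f b - f a) / (b - a)) * Dg c :=
  pDeriv_mvt_general a b hab f p Df Dg hfc hDf hDg
end

section
/- (Weierstrass function is nowhere p-differentiable) Let α > 1, p(t,h) = t + h^α (with h^α interpreted for h > 0 in the one-sided limit), let a be a positive odd integer, 0 < b < 1, and suppose a^{1/α}·b > 1 + (3/2)π. Then the Weierstrass function f(x) = Σ_{n=0}^∞ b^n cos(aⁿπx) satisfies: for every x ∈ ℝ there is a sequence h_m → 0⁺ such that |(f(x + h_m^α) − f(x))/h_m| → ∞; in particular, the p-derivative lim_{h→0} (f(x + h^α) − f(x))/h exists at no point x ∈ ℝ. -/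
open Filter Set Topology Real

/-!
Fix a scale `m` and move `x` by `k ≈ a⁻ᵐ` so that `aᵐ (x + k)` is the integer just above
`aᵐ x`. Because `a` is odd, every term `n ≥ m` of `f (x + k) - f x` then has the same sign,
and their sum has modulus at least `bᵐ`; the terms `n < m` are controlled by the Lipschitz
bound for `cos` and add up to at most `(3π/2) bᵐ / (a b - 1)`. Hence
`|f (x + k) - f x| ≥ C bᵐ` with `C > 0` as soon as `a b > 1 + 3π/2`. Taking `h = k ^ (1/α)`,
which is of size `(a ^ (1/α))⁻ᵐ`, the quotient grows like `(a ^ (1/α) b)ᵐ`.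
-/

noncomputable def weierstrassFun (a b x : ℝ) : ℝ :=
  ∑' n : ℕ, b ^ n * cos (a ^ n * π * x)

section Series

variable {b : ℝ}

lemma summable_pow_mul_cos (hb0 : 0 ≤ b) (hb1 : b < 1) (θ : ℕ → ℝ) :
    Summable fun n => b ^ n * cos (θ n) :=
  (summable_geometric_of_lt_one hb0 hb1).of_norm_bounded fun n => by
    rw [norm_mul, norm_pow, norm_of_nonneg hb0]
    exact mul_le_of_le_one_right (by positivity) (abs_cos_le_one _)

lemma weierstrassFun_sub_eq_sum_add_tsum (a : ℝ) (hb0 : 0 ≤ b) (hb1 : b < 1) (x y : ℝ) (m : ℕ) :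
    weierstrassFun a b y - weierstrassFun a b x =
      ∑ n ∈ Finset.range m, b ^ n * (cos (a ^ n * π * y) - cos (a ^ n * π * x)) +
        ∑' n, b ^ (n + m) * (cos (a ^ (n + m) * π * y) - cos (a ^ (n + m) * π * x)) := by
  have hy := summable_pow_mul_cos hb0 hb1 fun n => a ^ n * π * y
  have hx := summable_pow_mul_cos hb0 hb1 fun n => a ^ n * π * x
  simp only [mul_sub]
  rw [weierstrassFun, weierstrassFun, ← hy.tsum_sub hx, ← (hy.sub hx).sum_add_tsum_nat_add m]

lemma abs_sum_range_pow_mul_cos_sub_le {a : ℝ} (ha : 0 ≤ a) (hb : 0 ≤ b) (hab : 1 < a * b)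
    (x : ℝ) {k : ℝ} (hk : 0 ≤ k) (m : ℕ) :
    |∑ n ∈ Finset.range m, b ^ n * (cos (a ^ n * π * (x + k)) - cos (a ^ n * π * x))| ≤
      π * k * (a * b) ^ m / (a * b - 1) := by
  have hterm : ∀ n, |b ^ n * (cos (a ^ n * π * (x + k)) - cos (a ^ n * π * x))| ≤
      π * k * (a * b) ^ n := fun n => by
    calc _ = b ^ n * |cos (a ^ n * π * (x + k)) - cos (a ^ n * π * x)| := by
          rw [abs_mul, abs_of_nonneg (by positivity)]
      _ ≤ b ^ n * |a ^ n * π * (x + k) - a ^ n * π * x| :=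
          mul_le_mul_of_nonneg_left (abs_cos_sub_cos_le _ _) (by positivity)
      _ = π * k * (a * b) ^ n := by
          rw [show a ^ n * π * (x + k) - a ^ n * π * x = a ^ n * π * k by ring,
            abs_of_nonneg (by positivity), mul_pow]
          ring
  calc _ ≤ ∑ n ∈ Finset.range m, π * k * (a * b) ^ n :=
        (Finset.abs_sum_le_sum_abs _ _).trans (Finset.sum_le_sum fun n _ => hterm n)
    _ = π * k * (((a * b) ^ m - 1) / (a * b - 1)) := by
        rw [← Finset.mul_sum, geom_sum_eq hab.ne']
    _ ≤ π * k * (a * b) ^ m / (a * b - 1) := by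
        rw [mul_div_assoc]
        gcongr
        linarith

lemma one_le_tsum_pow_mul_one_add_cos (hb0 : 0 ≤ b) (hb1 : b < 1) {θ : ℕ → ℝ}
    (hθ : 0 ≤ cos (θ 0)) : 1 ≤ ∑' n, b ^ n * (1 + cos (θ n)) := by
  have hsum : Summable fun n => b ^ n * (1 + cos (θ n)) := by
    simpa only [mul_add, mul_one] using
      (summable_geometric_of_lt_one hb0 hb1).add (summable_pow_mul_cos hb0 hb1 θ)
  have h0 := hsum.le_tsum 0 fun n _ =>
    mul_nonneg (pow_nonneg hb0 n) (by linarith [neg_one_le_cos (θ n)])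
  simp only [pow_zero, one_mul] at h0
  linarith

end Series

lemma cos_odd_mul_pi_mul_int_add {c : ℕ} (hc : Odd c) (N : ℤ) (t : ℝ) :
    cos (c * π * (N + t)) = (-1) ^ N * cos (c * π * t) := by
  have h : c * π * (N + t) = c * π * t + ((c * N : ℤ) : ℝ) * π := by push_cast; ring
  rw [h, cos_add_int_mul_pi, zpow_mul, (Int.odd_coe_nat c |>.mpr hc).neg_one_zpow]

lemma tsum_tail_pow_mul_cos_sub_eq {a : ℕ} (ha : Odd a) (b : ℝ) {x y ε : ℝ} {N : ℤ} {m : ℕ}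
    (hy : (a : ℝ) ^ m * y = N + 1) (hx : (a : ℝ) ^ m * x = N + ε) :
    ∑' n, b ^ (n + m) * (cos ((a : ℝ) ^ (n + m) * π * y) - cos ((a : ℝ) ^ (n + m) * π * x)) =
      -(-1) ^ N * b ^ m * ∑' n, b ^ n * (1 + cos ((a : ℝ) ^ n * π * ε)) := by
  rw [← tsum_mul_left]
  refine tsum_congr fun n => ?_
  have hodd : Odd (a ^ n) := ha.pow
  have hcos : ∀ z t, (a : ℝ) ^ m * z = N + t →
      cos ((a : ℝ) ^ (n + m) * π * z) = (-1) ^ N * cos ((a : ℝ) ^ n * π * t) := fun z t hz => by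
    rw [show (a : ℝ) ^ (n + m) * π * z = ((a ^ n : ℕ) : ℝ) * π * ((a : ℝ) ^ m * z) by
      push_cast; ring, hz, cos_odd_mul_pi_mul_int_add hodd, Nat.cast_pow]
  have hcos_one : cos ((a : ℝ) ^ n * π * 1) = -1 := by
    rw [mul_one, ← Nat.cast_pow, cos_nat_mul_pi, hodd.neg_one_pow]
  rw [hcos y 1 hy, hcos x ε hx, hcos_one, pow_add]
  ring

theorem exists_abs_weierstrassFun_sub_ge {a : ℕ} (ha : Odd a) {b : ℝ} (hb0 : 0 < b) (hb1 : b < 1)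
    (hab : 1 + 3 / 2 * π < a * b) (x : ℝ) (m : ℕ) :
    ∃ k, 0 < k ∧ k ≤ 3 / 2 / (a : ℝ) ^ m ∧
      (1 - 3 / 2 * π / (a * b - 1)) * b ^ m ≤
        |weierstrassFun a b (x + k) - weierstrassFun a b x| := by
  have hapow : (0 : ℝ) < (a : ℝ) ^ m := pow_pos (by exact_mod_cast ha.pos) m
  have hab1 : 1 < (a : ℝ) * b := by linarith [pi_pos]
  set N := round ((a : ℝ) ^ m * x)
  set ε := (a : ℝ) ^ m * x - N
  obtain ⟨hε₁, hε₂⟩ := abs_le.mp (abs_sub_round ((a : ℝ) ^ m * x))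
  set k := (1 - ε) / (a : ℝ) ^ m
  have hk0 : 0 < k := div_pos (by linarith) hapow
  have hk : k ≤ 3 / 2 / (a : ℝ) ^ m := div_le_div_of_nonneg_right (by linarith) hapow.le
  refine ⟨k, hk0, hk, ?_⟩
  have hy : (a : ℝ) ^ m * (x + k) = N + 1 := by
    simp only [k, ε]; field_simp; ring
  have hx : (a : ℝ) ^ m * x = N + ε := by ring
  rw [weierstrassFun_sub_eq_sum_add_tsum _ hb0.le hb1, tsum_tail_pow_mul_cos_sub_eq ha b hy hx]
  set S := ∑ n ∈ Finset.range m,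
    b ^ n * (cos ((a : ℝ) ^ n * π * (x + k)) - cos ((a : ℝ) ^ n * π * x))
  set T := ∑' n, b ^ n * (1 + cos ((a : ℝ) ^ n * π * ε))
  have head : |S| ≤ 3 / 2 * π / (a * b - 1) * b ^ m := by
    refine (abs_sum_range_pow_mul_cos_sub_le (Nat.cast_nonneg a) hb0.le hab1 x hk0.le m).trans ?_
    have : π * k * (a * b) ^ m ≤ 3 / 2 * π * b ^ m := by
      calc π * k * (a * b) ^ m ≤ π * (3 / 2 / (a : ℝ) ^ m) * ((a : ℝ) ^ m * b ^ m) := by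
            rw [mul_pow]; gcongr
        _ = 3 / 2 * π * b ^ m := by field_simp
    rw [div_mul_eq_mul_div]
    gcongr
  have hT : 1 ≤ T := one_le_tsum_pow_mul_one_add_cos hb0.le hb1
    (cos_nonneg_of_mem_Icc ⟨by simp only [pow_zero, one_mul]; nlinarith [pi_pos],
      by simp only [pow_zero, one_mul]; nlinarith [pi_pos]⟩)
  have tail : |-(-1) ^ N * b ^ m * T| = b ^ m * T := by
    rw [abs_mul, abs_mul, abs_neg, abs_neg_one_zpow, one_mul, abs_of_pos (pow_pos hb0 m),
      abs_of_pos (by linarith)]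
  have := abs_sub_abs_le_abs_add (-(-1) ^ N * b ^ m * T) S
  rw [add_comm]
  nlinarith [pow_pos hb0 m]

lemma rpow_le_div_rpow_pow {K c a β : ℝ} (hK : 0 ≤ K) (hc : 0 ≤ c) (ha : 0 ≤ a) (hβ : 0 ≤ β)
    {m : ℕ} (h : K ≤ c / a ^ m) : K ^ β ≤ c ^ β / (a ^ β) ^ m := by
  rw [rpow_pow_comm ha, ← div_rpow hc (pow_nonneg ha m)]
  exact rpow_le_rpow hK h hβ

lemma tendsto_abs_div_atTop_of_le {A b c C : ℝ} (hc : 0 < c) (hC : 0 < C)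
    (hAb : 1 < A * b) {h u : ℕ → ℝ} (hh0 : ∀ m, 0 < h m) (hh : ∀ m, h m ≤ c / A ^ m)
    (hu : ∀ m, C * b ^ m ≤ |u m|) : Tendsto (fun m => |u m / h m|) atTop atTop := by
  refine tendsto_atTop_mono (fun m => ?_)
    ((tendsto_pow_atTop_atTop_of_one_lt hAb).const_mul_atTop (div_pos hC hc))
  calc C / c * (A * b) ^ m = C * b ^ m / (c / A ^ m) := by field_simp; ring
    _ ≤ |u m| / h m := div_le_div₀ (abs_nonneg _) (hu m) (hh0 m) (hh m)
    _ = |u m / h m| := by rw [abs_div, abs_of_pos (hh0 m)]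

lemma not_tendsto_nhds_of_tendsto_abs_comp_atTop {α : Type*} {l : Filter α} {g : α → ℝ}
    {u : ℕ → α} (hu : Tendsto u atTop l) (hg : Tendsto (fun m => |g (u m)|) atTop atTop)
    (L : ℝ) : ¬ Tendsto g l (𝓝 L) := fun hL =>
  not_tendsto_nhds_of_tendsto_atTop hg |L| (hL.comp hu).abs

theorem weierstrass_nowhere_pDifferentiable_general (α : ℝ) (hα : 1 < α)
    (a : ℕ) (ha : Odd a) (b : ℝ) (hb0 : 0 < b) (hb1 : b < 1)
    (hab : (a : ℝ) ^ (1 / α) * b > 1 + 3 / 2 * Real.pi)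
    (f : ℝ → ℝ)
    (hf : ∀ x : ℝ, f x = ∑' n : ℕ, b ^ n * Real.cos ((a : ℝ) ^ n * Real.pi * x)) :
    ∀ x : ℝ,
      (∃ hm : ℕ → ℝ, (∀ m, 0 < hm m) ∧ Tendsto hm atTop (𝓝 0) ∧
        Tendsto (fun m => |(f (x + hm m ^ α) - f x) / hm m|) atTop atTop) ∧
      ¬ ∃ L : ℝ, Tendsto (fun h : ℝ => (f (x + h ^ α) - f x) / h)
        (𝓝[≠] (0:ℝ)) (𝓝 L) := by
  obtain rfl : f = weierstrassFun a b := funext hf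
  have hβ : 0 < 1 / α := one_div_pos.mpr (by linarith)
  have ha1 : (1 : ℝ) ≤ a := by exact_mod_cast ha.pos
  set A := (a : ℝ) ^ (1 / α)
  have hAb : 1 < A * b := by linarith [pi_pos]
  have hab' : 1 + 3 / 2 * π < a * b := by
    have : A ≤ a := rpow_le_self_of_one_le ha1 ((div_le_one (by linarith)).mpr hα.le)
    nlinarith
  have hC : 0 < 1 - 3 / 2 * π / (a * b - 1) := by
    rw [sub_pos, div_lt_one (by linarith [pi_pos])]
    linarith
  intro x
  choose K hK0 hK hKf using exists_abs_weierstrassFun_sub_ge ha hb0 hb1 hab' x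
  set h := fun m => K m ^ (1 / α)
  have hh0 : ∀ m, 0 < h m := fun m => rpow_pos_of_pos (hK0 m) _
  have hhα : ∀ m, h m ^ α = K m := fun m => by
    rw [← rpow_mul (hK0 m).le, one_div_mul_cancel (by linarith), rpow_one]
  have hh : ∀ m, h m ≤ (3 / 2) ^ (1 / α) / A ^ m := fun m =>
    rpow_le_div_rpow_pow (hK0 m).le (by norm_num) (Nat.cast_nonneg a) hβ.le (hK m)
  have hh_tendsto : Tendsto h atTop (𝓝 0) := squeeze_zero (fun m => (hh0 m).le) hh
    (tendsto_const_nhds.div_atTop (tendsto_pow_atTop_atTop_of_one_lt (by nlinarith)))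
  have hblow := tendsto_abs_div_atTop_of_le (by positivity) hC hAb hh0 hh
    (u := fun m => weierstrassFun a b (x + h m ^ α) - weierstrassFun a b x)
    fun m => by simpa only [hhα] using hKf m
  refine ⟨⟨h, hh0, hh_tendsto, hblow⟩, fun ⟨L, hL⟩ => ?_⟩
  refine not_tendsto_nhds_of_tendsto_abs_comp_atTop ?_ hblow L hL
  exact tendsto_nhdsWithin_of_tendsto_nhds_of_eventually_within _ hh_tendsto
    (.of_forall fun m => (hh0 m).ne')

/-- Weierstrass' function `f x = Σ bⁿ cos(aⁿ π x)` is nowhere p-differentiable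
for `p(t,h) = t + h^α`, `α > 1`, `a` an odd positive integer, `0 < b < 1`,
provided `a^{1/α}·b > 1 + 3π/2`: at every `x` there is a positive sequence
`h_m → 0` along which the difference quotient blows up, and in particular the
p-derivative exists at no point. -/
theorem weierstrass_nowhere_pDifferentiable (α : ℝ) (hα : 1 < α)
    (a : ℕ) (ha : Odd a) (ha0 : 0 < a) (b : ℝ) (hb0 : 0 < b) (hb1 : b < 1)
    (hab : (a : ℝ) ^ (1 / α) * b > 1 + 3 / 2 * Real.pi)
    (f : ℝ → ℝ)
    (hf : ∀ x : ℝ, f x = ∑' n : ℕ, b ^ n * Real.cos ((a : ℝ) ^ n * Real.pi * x)) :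
    ∀ x : ℝ,
      (∃ hm : ℕ → ℝ, (∀ m, 0 < hm m) ∧ Tendsto hm atTop (𝓝 0) ∧
        Tendsto (fun m => |(f (x + hm m ^ α) - f x) / hm m|) atTop atTop) ∧
      ¬ ∃ L : ℝ, Tendsto (fun h : ℝ => (f (x + h ^ α) - f x) / h)
        (𝓝[≠] (0:ℝ)) (𝓝 L) :=
  weierstrass_nowhere_pDifferentiable_general α hα a ha b hb0 hb1 hab f hf
end
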